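/- Avis–Fukuda bound: between any two non-crossing spanning trees on n ≥ 3 points in convex position there is a flip sequence of length at most 2n − 4. -/

import Mathlib

/-!
Both trees are flipped to the star at vertex `0`, each flip adding one star edge; a tree
already has an edge at `0`, so it needs at most `n - 2` flips. If `T` is not the star, take a
widest chord `{c, d}` of `T` avoiding `0`. No chord of `T` separates `c` or `d` from `0`, and as
`T` has no triangle one of `{0, c}`, `{0, d}`, say `{0, b}`, is missing from `T`. Adding
`{0, b}` crosses nothing, and deleting the first edge of the tree path from `b` to `0`, which
avoids `0`, yields a non-crossing spanning tree with one more star edge.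
-/

open Finset

/-- An edge (chord) on `n` points in convex position, as an unordered pair of indices. -/
abbrev Edge (n : ℕ) := Sym2 (Fin n)

/-- The cyclic successor of a point. -/
def next {n : ℕ} (i : Fin n) : Fin n := ⟨((i : ℕ) + 1) % n, Nat.mod_lt _ i.pos⟩


/-- Chords `{a,b}` (with `a<b`) and `{c,d}` (with `c<d`) cross iff
`a<c<b<d` or `c<a<d<b`. -/
def Cross {n : ℕ} (e f : Edge n) : Prop :=
  ∃ a b c d : Fin n, e = s(a, b) ∧ f = s(c, d) ∧ a < b ∧ c < d ∧
    ((a < c ∧ c < b ∧ b < d) ∨ (c < a ∧ a < d ∧ d < b))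

/-- A set of chords is non-crossing if no two of its chords cross. -/
def NonCrossing {n : ℕ} (E : Finset (Edge n)) : Prop :=
  ∀ e ∈ E, ∀ f ∈ E, ¬ Cross e f

/-- A border edge joins two cyclically consecutive points (this includes `{n-1, 0}`,
i.e. `{v_n, v_1}`, since addition in `Fin n` wraps around). -/
def IsBorder {n : ℕ} (e : Edge n) : Prop := ∃ i : Fin n, e = s(i, next i)

/-- A spanning tree on the `n` points, given by its edge set: loopless, connected,
with `n - 1` edges. -/
def IsSpanningTree {n : ℕ} (T : Finset (Edge n)) : Prop :=
  (SimpleGraph.fromEdgeSet (T : Set (Edge n))).Connected ∧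
    T.card = n - 1 ∧ ∀ e ∈ T, ¬ e.IsDiag

/-- A non-crossing spanning tree. -/
def NCST {n : ℕ} (T : Finset (Edge n)) : Prop := IsSpanningTree T ∧ NonCrossing T

/-- A flip removes one edge and adds another so that the result is again a
non-crossing spanning tree. -/
def Flip {n : ℕ} (T T' : Finset (Edge n)) : Prop :=
  NCST T ∧ NCST T' ∧ ∃ e ∈ T, ∃ f, f ∉ T ∧ T' = insert f (T.erase e)

/-- A flip sequence of length `k` from `T₁` to `T₂`. -/
def FlipSeq {n : ℕ} (T₁ T₂ : Finset (Edge n)) (k : ℕ) : Prop :=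
  ∃ f : ℕ → Finset (Edge n), f 0 = T₁ ∧ f k = T₂ ∧ ∀ i < k, Flip (f i) (f (i + 1))

/-- There is a flip sequence from `T₁` to `T₂` of length at most `m`. -/
def FlipDistLE {n : ℕ} (T₁ T₂ : Finset (Edge n)) (m : ℕ) : Prop :=
  ∃ k ≤ m, FlipSeq T₁ T₂ k

open SimpleGraph

namespace SimpleGraph

variable {V : Type*}

lemma Connected.of_adj_reachable {G G' : SimpleGraph V} (hG : G.Connected)
    (h : ∀ ⦃u v⦄, G.Adj u v → G'.Reachable u v) : G'.Connected where
  preconnected u v := by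
    rw [reachable_iff_reflTransGen]
    exact ((reachable_iff_reflTransGen u v).mp (hG.preconnected u v)).lift' id
      fun u v huv => (reachable_iff_reflTransGen u v).mp (h huv)
  nonempty := hG.nonempty

lemma Connected.exists_exchange {T : Set (Sym2 V)} (hT : (fromEdgeSet T).Connected) {a b : V}
    (hab : a ≠ b) :
    ∃ x, s(x, b) ∈ T ∧ (fromEdgeSet (insert s(a, b) (T \ {s(x, b)}))).Connected := by
  obtain ⟨p, hp⟩ := hT.exists_isPath b a
  cases p with
  | nil => exact absurd rfl hab
  | @cons _ x _ hbx q =>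
    set G' := fromEdgeSet (insert s(a, b) (T \ {s(x, b)}))
    rw [fromEdgeSet_adj] at hbx
    have hxbT : s(x, b) ∈ T := Sym2.eq_swap ▸ hbx.1
    have hq : s(x, b) ∉ q.edges := fun h =>
      ((Walk.cons_isPath_iff _ q).mp hp).2 (q.fst_mem_support_of_mem_edges (Sym2.eq_swap ▸ h))
    have hxa : G'.Reachable x a := ⟨q.transfer G' fun e he => by
      have he' := q.edges_subset_edgeSet he
      rw [edgeSet_fromEdgeSet] at he' ⊢
      exact ⟨Set.mem_insert_of_mem _ ⟨he'.1, fun h => hq (h ▸ he)⟩, he'.2⟩⟩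
    have hxb : G'.Reachable x b :=
      hxa.trans (Adj.reachable ((fromEdgeSet_adj _).2 ⟨Set.mem_insert _ _, hab⟩))
    refine ⟨x, hxbT, hT.of_adj_reachable fun u v huv => ?_⟩
    rw [fromEdgeSet_adj] at huv
    by_cases he : s(u, v) = s(x, b)
    · rcases Sym2.eq_iff.mp he with ⟨rfl, rfl⟩ | ⟨rfl, rfl⟩
      exacts [hxb, hxb.symm]
    · exact Adj.reachable <|
        (fromEdgeSet_adj _).2 ⟨Set.mem_insert_of_mem _ ⟨huv.1, he⟩, huv.2⟩

end SimpleGraph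

lemma Sym2.exists_eq_mk_lt {α : Type*} [LinearOrder α] {e : Sym2 α} (he : ¬ e.IsDiag) :
    ∃ c d, c < d ∧ e = s(c, d) := by
  induction e using Sym2.ind with
  | _ c d =>
    rcases lt_or_gt_of_ne (fun h => he (by simp [h]) : c ≠ d) with h | h
    exacts [⟨c, d, h, rfl⟩, ⟨d, c, h, Sym2.eq_swap⟩]

section FlipSeq

variable {n : ℕ} {T₁ T₂ T₃ : Finset (Edge n)} {k k' : ℕ}

lemma FlipSeq.refl (T : Finset (Edge n)) : FlipSeq T T 0 :=
  ⟨fun _ => T, rfl, rfl, by simp⟩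

lemma FlipSeq.cons (h : Flip T₁ T₂) (hs : FlipSeq T₂ T₃ k) : FlipSeq T₁ T₃ (k + 1) := by
  obtain ⟨f, h0, hk, hf⟩ := hs
  refine ⟨fun i => if i = 0 then T₁ else f (i - 1), rfl, by simpa using hk, ?_⟩
  rintro (_ | i) hi
  · simpa [h0] using h
  · simpa using hf i (by omega)

lemma FlipSeq.trans (h : FlipSeq T₁ T₂ k) (h' : FlipSeq T₂ T₃ k') :
    FlipSeq T₁ T₃ (k + k') := by
  induction k generalizing T₁ with
  | zero =>
    obtain ⟨f, h0, hk, -⟩ := h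
    rwa [zero_add, ← h0, hk]
  | succ k ih =>
    obtain ⟨f, h0, hk, hf⟩ := h
    rw [add_right_comm]
    have htail : FlipSeq (f 1) T₂ k :=
      ⟨fun i => f (i + 1), rfl, hk, fun i _ => hf _ (by omega)⟩
    exact .cons (h0 ▸ hf 0 (by omega)) (ih htail)

lemma Flip.symm (h : Flip T₁ T₂) : Flip T₂ T₁ := by
  obtain ⟨h₁, h₂, e, he, f, hf, rfl⟩ := h
  refine ⟨h₂, h₁, f, mem_insert_self _ _, e, fun h => ?_, ?_⟩
  · rcases mem_insert.mp h with rfl | h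
    exacts [hf he, (mem_erase.mp h).1 rfl]
  · rw [erase_insert fun h => hf (mem_of_mem_erase h), insert_erase he]

lemma FlipSeq.symm (h : FlipSeq T₁ T₂ k) : FlipSeq T₂ T₁ k := by
  obtain ⟨f, h0, hk, hf⟩ := h
  refine ⟨fun i => f (k - i), by simpa using hk, by simpa using h0, fun i hi => ?_⟩
  have hi' : k - i = k - (i + 1) + 1 := by omega
  simpa only [hi'] using (hf (k - (i + 1)) (by omega)).symm

end FlipSeq

section ConvexPosition

variable {n : ℕ} {T : Finset (Edge n)}

lemma IsSpanningTree.isTree (hT : IsSpanningTree T) :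
    (fromEdgeSet (T : Set (Edge n))).IsTree := by
  obtain ⟨hconn, hcard, hloop⟩ := hT
  have hedges : (fromEdgeSet (T : Set (Edge n))).edgeSet = T := by
    rw [edgeSet_fromEdgeSet, sdiff_eq_left, Set.disjoint_left]
    exact hloop
  have := Fin.pos hconn.nonempty.some
  rw [isTree_iff_connected_and_card, hedges, Nat.card_coe_set_eq, Set.ncard_coe_finset, hcard,
    Nat.card_eq_fintype_card, Fintype.card_fin]
  exact ⟨hconn, by omega⟩

lemma IsSpanningTree.notMem_of_mem_of_mem (hT : IsSpanningTree T) {a c d : Fin n}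
    (hac : s(a, c) ∈ T) (had : s(a, d) ∈ T) : s(c, d) ∉ T := fun hcd => by
  have adj {u v : Fin n} (h : s(u, v) ∈ T) : (fromEdgeSet (T : Set (Edge n))).Adj u v :=
    (fromEdgeSet_adj _).2 ⟨h, fun huv => hT.2.2 _ h (by simp [huv])⟩
  exact hT.isTree.isAcyclic.cliqueFree le_rfl {a, c, d} <|
    is3Clique_triple_iff.mpr ⟨adj hac, adj had, adj hcd⟩

lemma IsSpanningTree.exists_exchange (hT : IsSpanningTree T) {a b : Fin n} (hab : a ≠ b)
    (habT : s(a, b) ∉ T) : ∃ x, x ≠ a ∧ s(x, b) ∈ T ∧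
      IsSpanningTree (insert s(a, b) (T.erase s(x, b))) := by
  obtain ⟨hconn, hcard, hloop⟩ := hT
  obtain ⟨x, hxbT, hconn'⟩ := hconn.exists_exchange hab
  refine ⟨x, fun h => habT (h ▸ hxbT), hxbT, ?_, ?_, ?_⟩
  · simpa using hconn'
  · have := card_pos.mpr ⟨_, hxbT⟩
    rw [card_insert_of_notMem fun h => habT (mem_of_mem_erase h), card_erase_of_mem hxbT]
    omega
  · intro e he
    rcases mem_insert.mp he with rfl | he
    exacts [by simpa using hab, hloop e (mem_of_mem_erase he)]

lemma Cross.symm {e f : Edge n} (h : Cross e f) : Cross f e := by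
  obtain ⟨a, b, c, d, he, hf, hab, hcd, hor⟩ := h
  exact ⟨c, d, a, b, hf, he, hcd, hab, hor.symm⟩

lemma NonCrossing.mono {T' : Finset (Edge n)} (hT' : NonCrossing T') (h : T ⊆ T') :
    NonCrossing T := fun e he f hf => hT' e (h he) f (h hf)

variable [NeZero n]

/-- The chords crossing `s(0, b)` are exactly those spanning `b`. -/
def Spans (e : Edge n) (b : Fin n) : Prop :=
  ∃ c d : Fin n, e = s(c, d) ∧ 0 < c ∧ c < b ∧ b < d

lemma spans_of_cross_mk_zero {b : Fin n} {f : Edge n} (h : Cross s(0, b) f) : Spans f b := by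
  obtain ⟨a, b', c, d, he, rfl, hab, hcd, hor⟩ := h
  rcases Sym2.eq_iff.mp he with ⟨rfl, rfl⟩ | ⟨rfl, -⟩
  · rcases hor with ⟨h₁, h₂, h₃⟩ | ⟨h₁, -⟩
    exacts [⟨c, d, rfl, h₁, h₂, h₃⟩, absurd h₁ (Fin.zero_le c).not_gt]
  · exact absurd hab (Fin.zero_le a).not_gt

lemma not_spans_mk_zero {b v : Fin n} : ¬ Spans s(0, v) b := by
  rintro ⟨c, d, he, hc, hcb, hbd⟩
  rcases Sym2.eq_iff.mp he with ⟨rfl, -⟩ | ⟨rfl, -⟩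
  exacts [hc.false, (Fin.zero_le b).not_gt hbd]

lemma NonCrossing.insert_mk_zero (hT : NonCrossing T) {b : Fin n}
    (hb : ∀ f ∈ T, ¬ Spans f b) : NonCrossing (insert s(0, b) T) := by
  intro e he f hf hef
  rcases mem_insert.mp he with rfl | he <;> rcases mem_insert.mp hf with rfl | hf
  · exact not_spans_mk_zero (spans_of_cross_mk_zero hef)
  · exact hb f hf (spans_of_cross_mk_zero hef)
  · exact hb e he (spans_of_cross_mk_zero hef.symm)
  · exact hT e he f hf hef

/-- A chord spanning an endpoint of a widest chord avoiding `0` would cross it or be wider. -/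
lemma NonCrossing.exists_visible_ends (hT : NonCrossing T) (hloop : ∀ e ∈ T, ¬ e.IsDiag)
    {e : Edge n} (he : e ∈ T) (h0 : 0 ∉ e) : ∃ c d, s(c, d) ∈ T ∧ 0 < c ∧ c < d ∧
      (∀ f ∈ T, ¬ Spans f c) ∧ ∀ f ∈ T, ¬ Spans f d := by
  obtain ⟨e₀, he₀, hmax⟩ := (T.filter fun e => 0 ∉ e).exists_max_image
    (fun e => (e.sup : ℕ) - e.inf) ⟨e, mem_filter.mpr ⟨he, h0⟩⟩
  obtain ⟨he₀T, h0e₀⟩ := mem_filter.mp he₀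
  obtain ⟨c, d, hcd, rfl⟩ := Sym2.exists_eq_mk_lt (hloop _ he₀T)
  have hc : 0 < c := Fin.pos_iff_ne_zero.mpr fun h => h0e₀ (h ▸ Sym2.mem_mk_left _ _)
  have hwide : ∀ c' d', s(c', d') ∈ T → 0 < c' → c' < d' → (d' : ℕ) - c' ≤ d - c := by
    intro c' d' hf hc' hcd'
    have h0f : 0 ∉ s(c', d') := by simp [Sym2.mem_iff, hc'.ne, (hc'.trans hcd').ne]
    simpa [hcd.le, hcd'.le] using hmax _ (mem_filter.mpr ⟨hf, h0f⟩)
  refine ⟨c, d, he₀T, hc, hcd, ?_, ?_⟩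
  · rintro f hf ⟨c', d', rfl, hc', hc'c, hcd'⟩
    by_cases hd' : d' < d
    · exact hT _ hf _ he₀T
        ⟨c', d', c, d, rfl, rfl, hc'c.trans hcd', hcd, .inl ⟨hc'c, hcd', hd'⟩⟩
    · have := hwide c' d' hf hc' (hc'c.trans hcd')
      omega
  · rintro f hf ⟨c', d', rfl, hc', hc'd, hdd'⟩
    by_cases hc'' : c < c'
    · exact hT _ he₀T _ hf
        ⟨c, d, c', d', rfl, rfl, hcd, hc'd.trans hdd', .inl ⟨hc'', hc'd, hdd'⟩⟩
    · have := hwide c' d' hf hc' (hc'd.trans hdd')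
      omega

variable (n) in
def starTree : Finset (Edge n) := (starGraph (0 : Fin n)).edgeFinset

lemma mem_starTree {e : Edge n} : e ∈ starTree n ↔ 0 ∈ e ∧ ¬ e.IsDiag := by
  induction e using Sym2.ind with
  | _ u v => simp only [starTree, mem_edgeFinset, mem_edgeSet, starGraph_adj, Sym2.mem_iff,
      Sym2.mk_isDiag_iff]; grind

lemma card_starTree : #(starTree n) = n - 1 := by
  have := (isTree_starGraph (0 : Fin n)).card_edgeFinset
  simp only [Fintype.card_fin] at this
  rw [starTree]
  omega

lemma IsSpanningTree.eq_starTree_of_subset (hT : IsSpanningTree T) (h : T ⊆ starTree n) :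
    T = starTree n :=
  eq_of_subset_of_card_le h (by rw [card_starTree, hT.2.1])

lemma IsSpanningTree.card_sdiff_starTree_le (hT : IsSpanningTree T) :
    #(T \ starTree n) ≤ n - 2 := by
  rw [card_sdiff, hT.2.1]
  rcases lt_or_ge n 2 with hn | hn
  · omega
  · have : Nontrivial (Fin n) := Fin.nontrivial_iff_two_le.mpr hn
    obtain ⟨u, hu⟩ := hT.1.preconnected.exists_adj_of_nontrivial 0
    have hu' : s(0, u) ∈ starTree n ∩ T :=
      mem_inter.mpr ⟨mem_starTree.mpr ⟨Sym2.mem_mk_left _ _, by simpa using hu.2⟩, hu.1⟩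
    have := card_pos.mpr ⟨_, hu'⟩
    omega

lemma NCST.exists_flip (hT : NCST T) {e : Edge n} (he : e ∈ T \ starTree n) :
    ∃ T', Flip T T' ∧ #(T' \ starTree n) + 1 = #(T \ starTree n) := by
  obtain ⟨heT, hes⟩ := mem_sdiff.mp he
  have h0 : 0 ∉ e := fun h => hes (mem_starTree.mpr ⟨h, hT.1.2.2 e heT⟩)
  obtain ⟨c, d, hcdT, hc, hcd, hvc, hvd⟩ := hT.2.exists_visible_ends hT.1.2.2 heT h0
  obtain ⟨b, hb, hbT, hvb⟩ : ∃ b, 0 < b ∧ s(0, b) ∉ T ∧ ∀ f ∈ T, ¬ Spans f b := by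
    by_cases hcT : s(0, c) ∈ T
    · exact ⟨d, hc.trans hcd, fun hdT => hT.1.notMem_of_mem_of_mem hcT hdT hcdT, hvd⟩
    · exact ⟨c, hc, hcT, hvc⟩
  obtain ⟨x, hx0, hxbT, hT'⟩ := hT.1.exists_exchange hb.ne hbT
  have hnc' := (hT.2.mono (erase_subset s(x, b) T)).insert_mk_zero
    fun f hf => hvb f (mem_of_mem_erase hf)
  refine ⟨_, ⟨hT, ⟨hT', hnc'⟩, _, hxbT, _, hbT, rfl⟩, ?_⟩
  have hxbs : s(x, b) ∈ T \ starTree n :=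
    mem_sdiff.mpr ⟨hxbT, by simp [mem_starTree, hx0.symm, hb.ne]⟩
  have h0bs : s(0, b) ∈ starTree n :=
    mem_starTree.mpr ⟨Sym2.mem_mk_left _ _, by simpa using hb.ne⟩
  rw [insert_sdiff_of_mem _ h0bs, erase_sdiff_comm, card_erase_add_one hxbs]

lemma NCST.flipSeq_starTree (hT : NCST T) : FlipSeq T (starTree n) #(T \ starTree n) := by
  induction hk : #(T \ starTree n) generalizing T with
  | zero =>
    rw [card_eq_zero, sdiff_eq_empty_iff_subset] at hk
    exact hT.1.eq_starTree_of_subset hk ▸ .refl T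
  | succ k ih =>
    obtain ⟨e, he⟩ := card_pos.mp (by omega : 0 < #(T \ starTree n))
    obtain ⟨T', hflip, hcard⟩ := hT.exists_flip he
    exact .cons hflip (ih hflip.2.1 (by omega))

end ConvexPosition

theorem avis_fukuda_general {n : ℕ} (T₁ T₂ : Finset (Edge n))
    (h₁ : NCST T₁) (h₂ : NCST T₂) : FlipDistLE T₁ T₂ (2 * n - 4) := by
  have : NeZero n := ⟨(Fin.pos h₁.1.1.nonempty.some).ne'⟩
  have hb₁ := h₁.1.card_sdiff_starTree_le
  have hb₂ := h₂.1.card_sdiff_starTree_le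
  exact ⟨_, by omega, h₁.flipSeq_starTree.trans h₂.flipSeq_starTree.symm⟩

/-- Avis–Fukuda: between any two non-crossing spanning trees on `n ≥ 3` points in convex
position there is a flip sequence of length at most `2n - 4`. -/
theorem avis_fukuda {n : ℕ} (hn : 3 ≤ n) (T₁ T₂ : Finset (Edge n))
    (h₁ : NCST T₁) (h₂ : NCST T₂) : FlipDistLE T₁ T₂ (2 * n - 4) :=
  avis_fukuda_general T₁ T₂ h₁ h₂
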